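/- For n ≥ 2, the classical Fibonacci group F(2, 2n) = ⟨z₁,…,z_{2n} | z_i z_{i+1} = z_{i+2} (subscripts mod 2n)⟩ with the additional relation z₂z₄⋯z_{2n} = e is not left-orderable. -/

import Mathlib

/-- A group is left-orderable if there is a strict total order that is left-invariant. -/
def IsLeftOrderable (G : Type*) [Group G] : Prop :=
  ∃ r : G → G → Prop, IsStrictTotalOrder G r ∧ ∀ x y z : G, r x y → r (z * x) (z * y)

/-- The Fibonacci relators `z_i z_{i+1} z_{i+2}⁻¹` (subscripts mod `2n`) together with
the extra relator `z₂z₄⋯z_{2n}`. -/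
def fib2Rels (n : ℕ) : Set (FreeGroup (ZMod (2 * n))) :=
  {w | ∃ i : ZMod (2 * n), w = FreeGroup.of i * FreeGroup.of (i + 1) * (FreeGroup.of (i + 2))⁻¹} ∪
    {((List.range n).map (fun j => FreeGroup.of ((2 * j + 2 : ℕ) : ZMod (2 * n)))).prod}

/-
In a left-ordered group, the relation `z_i z_{i+1} = z_{i+2}` propagates positivity (or
negativity) from two consecutive generators to all of them, which `z₂z₄⋯z_{2n} = 1` forbids. Hence
no generator is trivial (unless all are), and consecutive generators have opposite signs, so
`z₂, z₄, …, z_{2n}` share a sign: again impossible. That `z₁ ≠ 1` is seen in an abelian quotient,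
a `2n`-periodic Fibonacci sequence modulo `L_{2n} - 2`, whose even terms telescope to zero.
-/

open Function

theorem ZMod.forall_of_fib_rec {M : Type*} [Mul M] {m : ℕ} [NeZero m] {z : ZMod m → M}
    (hz : ∀ i, z i * z (i + 1) = z (i + 2)) {P : M → Prop} (hP : ∀ a b, P a → P b → P (a * b))
    {i : ZMod m} (h0 : P (z i)) (h1 : P (z (i + 1))) (j : ZMod m) : P (z j) := by
  have step : ∀ k : ℕ, P (z (i + k)) ∧ P (z (i + k + 1)) := by
    intro k
    induction k with
    | zero => simpa using ⟨h0, h1⟩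
    | succ k ih =>
      refine ⟨by simpa [add_assoc] using ih.2, ?_⟩
      rw [Nat.cast_succ, ← add_assoc, add_assoc _ 1, one_add_one_eq_two, ← hz]
      exact hP _ _ ih.1 ih.2
  simpa using (step (j - i).val).1

section LeftInvariantOrder

variable {G : Type*} [Group G]

theorem rel_one_mul_of_leftInvariant {r : G → G → Prop} [IsTrans G r]
    (hr : ∀ x y g, r x y → r (g * x) (g * y)) {a b : G} (ha : r 1 a) (hb : r 1 b) :
    r 1 (a * b) :=
  _root_.trans ha (by simpa using hr 1 b a hb)

theorem rel_one_list_prod_of_leftInvariant {r : G → G → Prop} [IsTrans G r]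
    (hr : ∀ x y g, r x y → r (g * x) (g * y)) {l : List G} (hl : l ≠ []) (h : ∀ x ∈ l, r 1 x) :
    r 1 l.prod :=
  List.prod_induction_nonempty _ (fun _ _ => rel_one_mul_of_leftInvariant hr) hl h

variable {m : ℕ} [NeZero m] {z : ZMod m → G} {l : List (ZMod m)}

theorem not_rel_one_consecutive (r : G → G → Prop) [IsStrictOrder G r]
    (hr : ∀ x y g, r x y → r (g * x) (g * y)) (hz : ∀ i, z i * z (i + 1) = z (i + 2))
    (hl : l ≠ []) (hprod : (l.map z).prod = 1) (i : ZMod m) :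
    ¬ (r 1 (z i) ∧ r 1 (z (i + 1))) := by
  rintro ⟨h0, h1⟩
  have hall := ZMod.forall_of_fib_rec hz (fun _ _ => rel_one_mul_of_leftInvariant hr) h0 h1
  have hpos := rel_one_list_prod_of_leftInvariant hr (l := l.map z) (by simpa using hl)
    (by simpa using fun i _ => hall i)
  exact irrefl _ (hprod ▸ hpos)

theorem ne_one_of_fib_rec (r : G → G → Prop) [IsStrictTotalOrder G r]
    (hr : ∀ x y g, r x y → r (g * x) (g * y)) (hz : ∀ i, z i * z (i + 1) = z (i + 2))
    (hz1 : ∃ i, z i ≠ 1) (hl : l ≠ []) (hprod : (l.map z).prod = 1) (i : ZMod m) :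
    z i ≠ 1 := by
  intro hi
  have hnext : z (i + 1 + 1) = z (i + 1) := by
    rw [add_assoc, one_add_one_eq_two, ← hz, hi, one_mul]
  rcases trichotomous_of r 1 (z (i + 1)) with hpos | htriv | hneg
  · exact not_rel_one_consecutive r hr hz hl hprod (i + 1) ⟨hpos, hnext ▸ hpos⟩
  · obtain ⟨j, hj⟩ := hz1
    exact hj (ZMod.forall_of_fib_rec hz (P := (· = 1)) (by rintro _ _ rfl rfl; exact one_mul 1)
      hi htriv.symm j)
  · exact not_rel_one_consecutive (swap r) (fun x y g => hr y x g) hz hl hprod (i + 1)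
      ⟨hneg, hnext ▸ hneg⟩

theorem rel_one_add_two_of_fib_rec (r : G → G → Prop) [IsStrictTotalOrder G r]
    (hr : ∀ x y g, r x y → r (g * x) (g * y)) (hz : ∀ i, z i * z (i + 1) = z (i + 2))
    (hz1 : ∃ i, z i ≠ 1) (hl : l ≠ []) (hprod : (l.map z).prod = 1) {i : ZMod m}
    (hi : r 1 (z i)) : r 1 (z (i + 2)) := by
  have hr' : ∀ x y g, swap r x y → swap r (g * x) (g * y) := fun x y g => hr y x g
  have hne := ne_one_of_fib_rec r hr hz hz1 hl hprod
  have hneg : r (z (i + 1)) 1 := by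
    rcases trichotomous_of r 1 (z (i + 1)) with h | h | h
    · exact absurd ⟨hi, h⟩ (not_rel_one_consecutive r hr hz hl hprod i)
    · exact absurd h.symm (hne _)
    · exact h
  rcases trichotomous_of r 1 (z (i + 2)) with h | h | h
  · exact h
  · exact absurd h.symm (hne _)
  · rw [← one_add_one_eq_two, ← add_assoc] at h
    exact absurd ⟨hneg, h⟩ (not_rel_one_consecutive (swap r) hr' hz hl hprod (i + 1))

theorem not_isLeftOrderable_of_fib_rec (hz : ∀ i, z i * z (i + 1) = z (i + 2))
    (hz1 : ∃ i, z i ≠ 1) (hl : l ≠ []) (heven : ∀ i ∈ l, Even i) (hprod : (l.map z).prod = 1) :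
    ¬ IsLeftOrderable G := by
  rintro ⟨r, hr_order, hr⟩
  -- Reversing a left-invariant order gives another one, so we may assume `1 < z 0`.
  suffices key : ∀ (r : G → G → Prop) [IsStrictTotalOrder G r],
      (∀ x y g, r x y → r (g * x) (g * y)) → ¬ r 1 (z 0) by
    rcases trichotomous_of r 1 (z 0) with hpos | htriv | hneg
    · exact key r hr hpos
    · exact ne_one_of_fib_rec r hr hz hz1 hl hprod 0 htriv.symm
    · exact key (swap r) (fun x y g => hr y x g) hneg
  intro r _ hr h0
  have hevens : ∀ k : ℕ, r 1 (z (k + k)) := by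
    intro k
    induction k with
    | zero => simpa using h0
    | succ k ih =>
      rw [Nat.cast_succ, show (k + 1 + (k + 1) : ZMod m) = k + k + 2 by ring]
      exact rel_one_add_two_of_fib_rec r hr hz hz1 hl hprod ih
  have hpos := rel_one_list_prod_of_leftInvariant hr (l := l.map z) (by simpa using hl) (by
    simp only [List.mem_map, forall_exists_index, and_imp, forall_apply_eq_imp_iff₂]
    intro i hi
    obtain ⟨k, rfl⟩ := heven i hi
    simpa using hevens k.val)
  exact irrefl _ (hprod ▸ hpos)

end LeftInvariantOrder

theorem periodic_of_fib_rec {α : Type*} [Add α] {s : ℕ → α}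
    (hs : ∀ k, s k + s (k + 1) = s (k + 2)) {p : ℕ} (h0 : s p = s 0) (h1 : s (p + 1) = s 1) :
    Periodic s p := by
  have step : ∀ k, s (k + p) = s k ∧ s (k + 1 + p) = s (k + 1) := by
    intro k
    induction k with
    | zero => simpa [add_comm] using ⟨h0, h1⟩
    | succ k ih =>
      refine ⟨ih.2, ?_⟩
      rw [show k + 1 + 1 + p = k + p + 2 by ring, ← hs, ih.1, add_right_comm, ih.2, hs]
  exact fun k => (step k).1

theorem sum_range_fib_rec_even {A : Type*} [AddCommGroup A] {s : ℕ → A}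
    (hs : ∀ k, s k + s (k + 1) = s (k + 2)) (N : ℕ) :
    ((List.range N).map fun j => s (2 * j + 2)).sum = s (2 * N + 1) - s 1 := by
  induction N with
  | zero => simp
  | succ N ih =>
    rw [List.sum_range_succ, ih, show 2 * (N + 1) + 1 = 2 * N + 1 + 2 by ring, ← hs (2 * N + 1)]
    abel

theorem Function.Periodic.map_val_natCast {α : Type*} {s : ℕ → α} {m : ℕ} (hs : Periodic s m)
    (k : ℕ) : s (k : ZMod m).val = s k := by
  rw [ZMod.val_natCast, hs.map_mod_nat]

theorem lift_fib2Rels_eq_one {A : Type*} [AddCommGroup A] {n : ℕ} [NeZero n] {s : ℕ → A}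
    (hs : ∀ k, s k + s (k + 1) = s (k + 2)) (hper : Periodic s (2 * n)) :
    ∀ w ∈ fib2Rels n,
      FreeGroup.lift (fun i : ZMod (2 * n) => Multiplicative.ofAdd (s i.val)) w = 1 := by
  rintro w (⟨i, rfl⟩ | rfl)
  · have hval (k : ℕ) : s (i + k).val = s (i.val + k) := by
      rw [← hper.map_val_natCast (i.val + k), Nat.cast_add, ZMod.natCast_zmod_val]
    have h1 := hval 1
    have h2 := hval 2
    rw [Nat.cast_one] at h1
    rw [Nat.cast_ofNat] at h2
    simp only [map_mul, map_inv, FreeGroup.lift_apply_of, mul_inv_eq_one, ← ofAdd_add, h1, h2, hs]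
  · have hterm : FreeGroup.lift (fun i : ZMod (2 * n) => Multiplicative.ofAdd (s i.val)) ∘
        (fun j => FreeGroup.of ((2 * j + 2 : ℕ) : ZMod (2 * n))) =
        Multiplicative.ofAdd ∘ fun j => s (2 * j + 2) := by
      funext j
      rw [comp_apply, FreeGroup.lift_apply_of, hper.map_val_natCast]
      rfl
    rw [map_list_prod, List.map_map, hterm, ← List.map_map, ← ofAdd_list_prod,
      sum_range_fib_rec_even hs, add_comm, hper, sub_self, ofAdd_zero]

/-- `L_{2n} - 2` for the Lucas numbers `L`, that is `-det (Q ^ (2n) - 1)` for the Fibonacci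
matrix `Q`. -/
def fibModulus (n : ℕ) : ℕ := Nat.fib (2 * n - 1) + Nat.fib (2 * n + 1) - 2

/-- The seed `(-F_{2n}, F_{2n-1} - 1)` lies in the kernel of `Q ^ (2n) - 1` modulo its
determinant. -/
def fibPeriodicSeq (n k : ℕ) : ZMod (fibModulus n) :=
  (Nat.fib (2 * n + 1) - 1) * Nat.fib k - Nat.fib (2 * n) * Nat.fib (k + 1)

theorem fibPeriodicSeq_add (n k : ℕ) :
    fibPeriodicSeq n k + fibPeriodicSeq n (k + 1) = fibPeriodicSeq n (k + 2) := by
  simp only [fibPeriodicSeq, Nat.fib_add_two, Nat.cast_add]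
  ring

theorem fib_two_mul_add_one {n : ℕ} (hn : n ≠ 0) :
    Nat.fib (2 * n + 1) = Nat.fib (2 * n - 1) + Nat.fib (2 * n) := by
  obtain ⟨k, rfl⟩ := Nat.exists_eq_add_one_of_ne_zero hn
  exact Nat.fib_add_two

theorem fib_cassini_two_mul {n : ℕ} (hn : n ≠ 0) :
    (Nat.fib (2 * n + 1) * Nat.fib (2 * n - 1) - Nat.fib (2 * n) ^ 2 : ℤ) = 1 := by
  have h := Int.fib_succ_mul_fib_pred_sub_fib_sq (2 * n : ℕ)
  rw [show ((2 * n : ℕ) : ℤ) - 1 = (2 * n - 1 : ℕ) by omega, ← Nat.cast_succ, Int.fib_natCast,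
    Int.fib_natCast, Int.fib_natCast, Int.natAbs_natCast, pow_mul, neg_one_sq, one_pow] at h
  exact h

theorem fibPeriodicSeq_periodic {n : ℕ} (hn : n ≠ 0) :
    Function.Periodic (fibPeriodicSeq n) (2 * n) := by
  refine periodic_of_fib_rec (fibPeriodicSeq_add n) ?_ ?_
  · simp only [fibPeriodicSeq, Nat.fib_zero]
    ring
  · have hx := congrArg (Nat.cast : ℕ → ZMod (fibModulus n)) (fib_two_mul_add_one hn)
    have hcas := congrArg (Int.cast : ℤ → ZMod (fibModulus n)) (fib_cassini_two_mul hn)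
    have hM : ((fibModulus n + 2 : ℕ) : ZMod (fibModulus n)) =
        (Nat.fib (2 * n - 1) + Nat.fib (2 * n + 1) : ℕ) := by
      congr 1
      have := Nat.fib_pos.2 (show 0 < 2 * n - 1 by omega)
      have := Nat.fib_pos.2 (show 0 < 2 * n + 1 by omega)
      unfold fibModulus
      omega
    push_cast [ZMod.natCast_self] at hx hcas hM
    simp only [fibPeriodicSeq, Nat.fib_add_two, Nat.fib_one, Nat.cast_add, Nat.cast_one]
    linear_combination hcas + (Nat.fib (2 * n + 1) - 1 : ZMod (fibModulus n)) * hx + hM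

theorem fibPeriodicSeq_one_ne_zero {n : ℕ} (hn : 2 ≤ n) : fibPeriodicSeq n 1 ≠ 0 := by
  have hu : 2 ≤ Nat.fib (2 * n - 1) :=
    le_trans (by decide) (Nat.fib_mono (show 3 ≤ 2 * n - 1 by omega))
  have hx := fib_two_mul_add_one (show n ≠ 0 by omega)
  have hy : 1 ≤ Nat.fib (2 * n) := Nat.fib_pos.2 (by omega)
  have hseq : fibPeriodicSeq n 1 = (Nat.fib (2 * n - 1) - 1 : ℕ) := by
    simp only [fibPeriodicSeq, Nat.fib_one, hx]
    push_cast [Nat.cast_sub (by omega : 1 ≤ Nat.fib (2 * n - 1))]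
    ring
  rw [hseq, Ne, ZMod.natCast_eq_zero_iff]
  intro hdvd
  have := Nat.le_of_dvd (by omega) hdvd
  unfold fibModulus at this
  omega

theorem fib2Rels_of_mul_of (n : ℕ) (i : ZMod (2 * n)) :
    (PresentedGroup.of i : PresentedGroup (fib2Rels n)) * PresentedGroup.of (i + 1) =
      PresentedGroup.of (i + 2) :=
  mul_inv_eq_one.mp (PresentedGroup.one_of_mem (Or.inl ⟨i, rfl⟩))

theorem fib2Rels_prod_of_even (n : ℕ) :
    ((List.range n).map fun j =>
      (PresentedGroup.of ((2 * j + 2 : ℕ) : ZMod (2 * n)) : PresentedGroup (fib2Rels n))).prod =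
        1 := by
  have := PresentedGroup.one_of_mem (rels := fib2Rels n) (Set.mem_union_right _ rfl)
  rwa [map_list_prod, List.map_map] at this

theorem fib2Rels_of_one_ne_one {n : ℕ} (hn : 2 ≤ n) :
    (PresentedGroup.of 1 : PresentedGroup (fib2Rels n)) ≠ 1 := by
  have : NeZero n := ⟨by omega⟩
  have : Fact (1 < 2 * n) := ⟨by omega⟩
  intro h
  have := congrArg (PresentedGroup.toGroup
    (lift_fib2Rels_eq_one (fibPeriodicSeq_add n) (fibPeriodicSeq_periodic (NeZero.ne n)))) h
  rw [PresentedGroup.toGroup.of, map_one, ofAdd_eq_one, ZMod.val_one] at this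
  exact fibPeriodicSeq_one_ne_zero hn this

/-- For `n ≥ 2`, the classical Fibonacci group `F(2, 2n)` with the additional relation
`z₂z₄⋯z_{2n} = e` is not left-orderable. -/
theorem stmt_11 (n : ℕ) (hn : 2 ≤ n) :
    ¬ IsLeftOrderable (PresentedGroup (fib2Rels n)) := by
  have : NeZero n := ⟨by omega⟩
  refine not_isLeftOrderable_of_fib_rec (fib2Rels_of_mul_of n) ⟨1, fib2Rels_of_one_ne_one hn⟩
    (l := (List.range n).map fun j => ((2 * j + 2 : ℕ) : ZMod (2 * n)))
    (by simpa using NeZero.ne n) ?_ ?_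
  · simp only [List.mem_map]
    rintro _ ⟨j, -, rfl⟩
    exact ⟨(j + 1 : ℕ), by push_cast; ring⟩
  · rw [List.map_map]
    exact fib2Rels_prod_of_even n
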